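/- Let α be a composition. Then: (a) there is a bijection between standard composition tableaux of shape α and those of shape α·(1) under which an SCT T of shape α with com(T) = β corresponds to an SCT of shape α·(1) with descent composition β·(1); (b) there is a bijection between standard composition tableaux of shape α and those of shape α·(1,2) under which an SCT T of shape α with com(T) = β corresponds to an SCT of shape α·(1,2) with descent composition β·(1,2). Consequently d_{(α·(1))(β·(1))} = d_{αβ} and d_{(α·(1,2))(β·(1,2))} = d_{αβ} for all β, and these account for all SCTx of shapes α·(1) and α·(1,2). -/

import Mathlib

/-- `SCTChain α U`: the filling `U` of the diagram of the composition `α`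
(cells `0`-indexed, rows numbered from the top) arises from a saturated chain
in the poset `L_C` of compositions, where at each cover step either a new
part `1` is prepended or the leftmost part of a given size is increased by
`1`, and the cell created at the step reaching a composition of size `s` is
filled with `s`. -/
inductive SCTChain : List ℕ → ((ℕ × ℕ) → ℕ) → Prop
  | nil : SCTChain [] (fun _ => 0)
  | prepend {β : List ℕ} {U : (ℕ × ℕ) → ℕ} (h : SCTChain β U) :
      SCTChain (1 :: β)
        (fun c => if c = (0, 0) then β.sum + 1
          else if c.1 = 0 then 0 else U (c.1 - 1, c.2))
  | grow {β : List ℕ} {U : (ℕ × ℕ) → ℕ} (h : SCTChain β U) (i : ℕ)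
      (hi : i < β.length) (hleft : ∀ j < i, β.getD j 0 ≠ β.getD i 0) :
      SCTChain (β.set i (β.getD i 0 + 1))
        (fun c => if c = (i, β.getD i 0) then β.sum + 1 else U c)

/-- `T` is a standard composition tableau of shape `α ⊨ n`: the filling of
the diagram of `α` obtained from a saturated chain
`∅ = α^{n+1} ⋖ ⋯ ⋖ α^1 = α` in `L_C` by placing entry `i` in the cell in
which `α^i` differs from `α^{i+1}` (so the cell created at the step reaching
size `s` receives the entry `n + 1 - s`); entries are `0` off the diagram. -/
def IsSCT (α : List ℕ) (T : (ℕ × ℕ) → ℕ) : Prop :=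
  ∃ U, SCTChain α U ∧ T = fun c => if U c = 0 then 0 else α.sum + 1 - U c

/-- The descent set of a standard composition tableau: those `i` such that
the entry `i+1` lies in a cell weakly to the right of the cell containing
`i`. -/
def desC (T : (ℕ × ℕ) → ℕ) : Set ℕ :=
  {i | 0 < i ∧ ∃ p q : ℕ × ℕ, T p = i ∧ T q = i + 1 ∧ p.2 ≤ q.2}

/-- `set(α) = {α₁, α₁+α₂, …, α₁+⋯+α_{ℓ(α)-1}}`, the subset of `[n-1]`
associated to a composition `α ⊨ n`; `com(T) = β` iff `desC T = compToSet β`. -/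
def compToSet (α : List ℕ) : Set ℕ :=
  {s | ∃ i, 0 < i ∧ i < α.length ∧ s = (α.take i).sum}

/-- The quasisymmetric Schur function `S_α` is F-multiplicity free iff all
standard composition tableaux of shape `α` have pairwise distinct descent
sets. -/
def FmfSCT (α : List ℕ) : Prop :=
  ∀ T T', IsSCT α T → IsSCT α T' → desC T = desC T' → T = T'

/-!
Read a saturated chain of `L_C` ending at `α·σ` backwards. While `α` is not used up, the last
step cannot grow a row of `σ`, since no composition grows into `σ = (1)` or `σ = (1,2)` by adding
`1` to a leftmost part; so it acts on `α` alone. Hence every chain first builds `σ` in the bottom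
rows and then `α` on top of it, and every such pair of chains concatenates. So the SCTs of shape
`α·σ` are exactly an SCT of shape `α` stacked on the unique SCT of shape `σ` with entries shifted
by `|α|`, whose descent set is `∅` resp. `{1}`. The one new descent is `|α|`: that entry sits in
the first column, as the bottom row of `α` is the first one created.
-/

/-- In `L_C`, `σ` covers the composition `τ` by adding `1` to a leftmost part of `τ`. -/
def GrowCover (τ σ : List ℕ) : Prop :=
  (∀ x ∈ τ, 0 < x) ∧
    ∃ k < τ.length, (∀ j < k, τ.getD j 0 ≠ τ.getD k 0) ∧ τ.set k (τ.getD k 0 + 1) = σ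

theorem List.sum_set_getD_add_one {l : List ℕ} {i : ℕ} (hi : i < l.length) :
    (l.set i (l.getD i 0 + 1)).sum = l.sum + 1 := by
  rw [List.sum_set, if_pos hi, List.getD_eq_getElem _ _ hi, ← List.sum_take_add_sum_drop l i,
    List.drop_eq_getElem_cons hi, List.sum_cons]
  ring

theorem not_growCover_one (τ : List ℕ) : ¬GrowCover τ [1] := by
  rintro ⟨hτ, k, hk, -, h⟩
  obtain ⟨a, rfl⟩ := List.length_eq_one_iff.mp (by simpa using congrArg List.length h)
  obtain rfl : k = 0 := by simpa using hk
  have : a + 1 = 1 := by simpa using h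
  exact (hτ a (by simp)).ne' (by omega)

theorem not_growCover_one_two (τ : List ℕ) : ¬GrowCover τ [1, 2] := by
  rintro ⟨hτ, k, hk, hleft, h⟩
  obtain ⟨a, b, rfl⟩ := List.length_eq_two.mp (by simpa using congrArg List.length h)
  have := hτ a (by simp)
  simp only [List.length_cons, List.length_nil] at hk
  interval_cases k
  · have : a + 1 = 1 ∧ b = 2 := by simpa using h
    omega
  · have : a = 1 ∧ b + 1 = 2 := by simpa using h
    exact hleft 0 one_pos (show a = b by omega)

namespace SCTChain

def prependFill (β : List ℕ) (U : ℕ × ℕ → ℕ) : ℕ × ℕ → ℕ :=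
  fun c => if c = (0, 0) then β.sum + 1 else if c.1 = 0 then 0 else U (c.1 - 1, c.2)

def growFill (β : List ℕ) (U : ℕ × ℕ → ℕ) (i : ℕ) : ℕ × ℕ → ℕ :=
  fun c => if c = (i, β.getD i 0) then β.sum + 1 else U c

/-- The filling of the chain that first builds `σ` with filling `V` and then `α`, with filling
`U`, in the rows above it. -/
def appendFill (α σ : List ℕ) (U V : ℕ × ℕ → ℕ) : ℕ × ℕ → ℕ := fun c =>
  if c.1 < α.length then (if U c = 0 then 0 else U c + σ.sum) else V (c.1 - α.length, c.2)

variable {α β γ σ : List ℕ} {U V W : ℕ × ℕ → ℕ}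

theorem pos (h : SCTChain γ U) : ∀ x ∈ γ, 0 < x := by
  induction h with
  | nil => simp
  | prepend _ ih => simpa using ih
  | grow _ i _ _ ih =>
    intro x hx
    rcases List.mem_or_eq_of_mem_set hx with hx | rfl
    exacts [ih x hx, Nat.succ_pos _]

theorem growCover (h : SCTChain β U) {i : ℕ} (hi : i < β.length)
    (hleft : ∀ j < i, β.getD j 0 ≠ β.getD i 0) : GrowCover β (β.set i (β.getD i 0 + 1)) :=
  ⟨h.pos, i, hi, hleft, rfl⟩

theorem eq_zero_of_length_le (h : SCTChain γ U) {c : ℕ × ℕ} (hc : γ.length ≤ c.1) : U c = 0 := by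
  induction h generalizing c with
  | nil => rfl
  | @prepend β U _ ih =>
    obtain ⟨a, b⟩ := c
    simp only [List.length_cons] at hc
    simp only [Prod.mk.injEq, show a ≠ 0 by omega, false_and, if_false]
    exact ih (by simp only; omega)
  | @grow β U _ i hi _ ih =>
    rw [List.length_set] at hc
    simp only [show c ≠ (i, β.getD i 0) by rintro rfl; simp only at hc; omega, if_false]
    exact ih hc

theorem nil_eq (h : SCTChain [] U) : U = fun _ => 0 :=
  funext fun _ => h.eq_zero_of_length_le (Nat.zero_le _)

theorem le_sum (h : SCTChain γ U) (c : ℕ × ℕ) : U c ≤ γ.sum := by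
  induction h generalizing c with
  | nil => exact le_rfl
  | @prepend β U _ ih =>
    simp only [List.sum_cons]
    split_ifs
    exacts [by omega, Nat.zero_le _, by have := ih (c.1 - 1, c.2); omega]
  | @grow β U _ i hi _ ih =>
    simp only [List.sum_set_getD_add_one hi]
    split_ifs
    exacts [le_rfl, by have := ih c; omega]

theorem exists_eq_sum (h : SCTChain γ U) (hγ : γ ≠ []) : ∃ c, U c = γ.sum := by
  cases h with
  | nil => exact absurd rfl hγ
  | prepend => exact ⟨(0, 0), by simp [add_comm]⟩
  | @grow β U _ i hi _ => exact ⟨(i, β.getD i 0), by rw [List.sum_set_getD_add_one hi]; simp⟩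

theorem bottom_corner_eq_one (h : SCTChain γ U) (hγ : γ ≠ []) : U (γ.length - 1, 0) = 1 := by
  induction h with
  | nil => exact absurd rfl hγ
  | @prepend β U hβ ih =>
    rcases eq_or_ne β [] with rfl | hβ0
    · rfl
    · have hlen : β.length ≠ 0 := by simpa using hβ0
      simpa [hlen] using ih hβ0
  | @grow β U hβ i hi _ ih =>
    have hβ0 : β ≠ [] := List.ne_nil_of_length_pos (by omega)
    have hpos : 0 < β.getD i 0 := hβ.pos _ (List.getD_eq_getElem β 0 hi ▸ List.getElem_mem hi)
    have hne : ((β.length - 1 : ℕ), 0) ≠ (i, β.getD i 0) := fun e => hpos.ne (congrArg Prod.snd e)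
    simpa only [List.length_set, if_neg hne] using ih hβ0

theorem appendFill_nil (σ : List ℕ) (U V : ℕ × ℕ → ℕ) : appendFill [] σ U V = V :=
  rfl

theorem appendFill_prependFill :
    appendFill (1 :: β) σ (prependFill β U) V = prependFill (β ++ σ) (appendFill β σ U V) := by
  funext ⟨a, b⟩
  simp only [appendFill, prependFill, List.length_cons, List.sum_append, Prod.mk.injEq]
  split_ifs <;> first | rfl | omega | (congr 2; omega)

theorem appendFill_growFill {i : ℕ} (hi : i < β.length) :
    appendFill (β.set i (β.getD i 0 + 1)) σ (growFill β U i) V =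
      growFill (β ++ σ) (appendFill β σ U V) i := by
  funext ⟨a, b⟩
  simp only [appendFill, growFill, List.getD_append _ _ _ _ hi, List.length_set, List.sum_append,
    Prod.mk.injEq]
  split_ifs <;> first | rfl | omega

theorem append (hU : SCTChain α U) (hV : SCTChain σ V) :
    SCTChain (α ++ σ) (appendFill α σ U V) := by
  induction hU with
  | nil => simpa [appendFill_nil] using hV
  | @prepend β U _ ih =>
    change SCTChain (1 :: (β ++ σ)) (appendFill (1 :: β) σ (prependFill β U) V)
    rw [appendFill_prependFill]
    exact ih.prepend
  | @grow β U _ i hi hleft ih =>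
    change SCTChain (β.set i (β.getD i 0 + 1) ++ σ) (appendFill _ σ (growFill β U i) V)
    have hset : (β ++ σ).set i ((β ++ σ).getD i 0 + 1) = β.set i (β.getD i 0 + 1) ++ σ := by
      rw [List.getD_append _ _ _ _ hi, List.set_append, if_pos hi]
    rw [appendFill_growFill hi, ← hset]
    refine ih.grow i (by simp only [List.length_append]; omega) fun j hj => ?_
    rw [List.getD_append _ _ _ _ hi, List.getD_append _ _ _ _ (hj.trans hi)]
    exact hleft j hj

theorem lt_length_of_set_eq_append (hσ : ∀ τ, ¬GrowCover τ σ) (hβ : SCTChain β U) {i : ℕ}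
    (hi : i < β.length) (hleft : ∀ j < i, β.getD j 0 ≠ β.getD i 0)
    (h : β.set i (β.getD i 0 + 1) = α ++ σ) : i < α.length := by
  by_contra hi₁
  have hlen : (β.take α.length).length = α.length := by
    have := congrArg List.length h
    simp only [List.length_set, List.length_append] at this
    simp only [List.length_take]
    omega
  rw [← List.take_append_drop α.length β] at h hi hleft
  rw [List.set_append, hlen, if_neg hi₁, List.getD_append_right _ _ _ _ (by omega), hlen] at h
  refine hσ _ ⟨fun x hx => hβ.pos x (List.mem_of_mem_drop hx), i - α.length,
    by simp only [List.length_append] at hi; omega, fun j hj => ?_, (List.append_inj h hlen).2⟩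
  have := hleft (α.length + j) (by omega)
  rwa [List.getD_append_right _ _ _ _ (by omega), List.getD_append_right _ _ _ _ (by omega), hlen,
    Nat.add_sub_cancel_left] at this

theorem exists_appendFill_of_eq_append (hσ : ∀ τ, ¬GrowCover τ σ) (h : SCTChain γ W)
    (α : List ℕ) (hγ : γ = α ++ σ) :
    ∃ U V, SCTChain α U ∧ SCTChain σ V ∧ W = appendFill α σ U V := by
  induction h generalizing α with
  | nil =>
    obtain ⟨rfl, rfl⟩ := List.append_eq_nil_iff.mp hγ.symm
    exact ⟨_, _, nil, nil, rfl⟩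
  | @prepend β U hβ ih =>
    rcases α with _ | ⟨a, α⟩
    · exact ⟨_, _, nil, hγ ▸ hβ.prepend, rfl⟩
    · obtain ⟨rfl, rfl⟩ := List.cons_eq_cons.mp hγ
      obtain ⟨U, V, hU, hV, rfl⟩ := ih α rfl
      exact ⟨_, V, hU.prepend, hV, appendFill_prependFill.symm⟩
  | @grow β U hβ i hi hleft ih =>
    have hiα := hβ.lt_length_of_set_eq_append hσ hi hleft hγ
    have hdrop : β.drop α.length = σ := by
      simpa [List.drop_set_of_lt hiα] using congrArg (List.drop α.length) hγ
    obtain ⟨β₁, rfl⟩ : ∃ β₁, β = β₁ ++ σ := ⟨_, hdrop ▸ (List.take_append_drop _ _).symm⟩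
    have hi₁ : i < β₁.length := by
      have := congrArg List.length hγ
      simp only [List.length_set, List.length_append] at this
      omega
    rw [List.set_append, if_pos hi₁, List.getD_append _ _ _ _ hi₁] at hγ
    obtain rfl := List.append_cancel_right hγ
    obtain ⟨U, V, hU, hV, rfl⟩ := ih β₁ rfl
    refine ⟨_, V, hU.grow i hi₁ fun j hj => ?_, hV, (appendFill_growFill hi₁).symm⟩
    have := hleft j hj
    rwa [List.getD_append _ _ _ _ hi₁, List.getD_append _ _ _ _ (hj.trans hi₁)] at this

theorem append_iff (hσ : ∀ τ, ¬GrowCover τ σ) :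
    SCTChain (α ++ σ) W ↔ ∃ U V, SCTChain α U ∧ SCTChain σ V ∧ W = appendFill α σ U V :=
  ⟨fun h => h.exists_appendFill_of_eq_append hσ α rfl, fun ⟨_, _, hU, hV, hW⟩ => hW ▸ hU.append hV⟩

theorem eq_of_one (h : SCTChain [1] U) : U = prependFill [] fun _ => 0 := by
  generalize hγ : [1] = γ at h
  cases h with
  | nil => simp at hγ
  | @prepend β U hβ =>
    obtain rfl : β = [] := by simpa using hγ
    rw [hβ.nil_eq]
    rfl
  | @grow β U hβ i hi hleft => exact (not_growCover_one β (hγ ▸ hβ.growCover hi hleft)).elim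

theorem eq_of_two (h : SCTChain [2] U) : U = growFill [1] (prependFill [] fun _ => 0) 0 := by
  generalize hγ : [2] = γ at h
  cases h with
  | nil => simp at hγ
  | prepend => simp at hγ
  | @grow β U hβ i hi hleft =>
    obtain ⟨a, rfl⟩ : ∃ a, β = [a] :=
      List.length_eq_one_iff.mp (by simpa using (congrArg List.length hγ).symm)
    obtain rfl : i = 0 := by simpa using hi
    obtain rfl : a = 1 := by simpa [eq_comm] using hγ
    rw [hβ.eq_of_one]
    rfl

theorem eq_of_one_two (h : SCTChain [1, 2] U) :
    U = prependFill [2] (growFill [1] (prependFill [] fun _ => 0) 0) := by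
  generalize hγ : [1, 2] = γ at h
  cases h with
  | nil => simp at hγ
  | @prepend β U hβ =>
    obtain rfl : β = [2] := by simpa using hγ.symm
    rw [hβ.eq_of_two]
    rfl
  | @grow β U hβ i hi hleft =>
    exact (not_growCover_one_two β (hγ ▸ hβ.growCover hi hleft)).elim

end SCTChain

def tableauOfFill (γ : List ℕ) (U : ℕ × ℕ → ℕ) : ℕ × ℕ → ℕ :=
  fun c => if U c = 0 then 0 else γ.sum + 1 - U c

def stackTableau (α : List ℕ) (T₁ T₂ : ℕ × ℕ → ℕ) : ℕ × ℕ → ℕ := fun c =>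
  if c.1 < α.length then T₁ c
  else if T₂ (c.1 - α.length, c.2) = 0 then 0 else T₂ (c.1 - α.length, c.2) + α.sum

section

variable {α σ : List ℕ} {T T₁ T₂ : ℕ × ℕ → ℕ}

theorem tableauOfFill_appendFill {U V : ℕ × ℕ → ℕ} (hV : SCTChain σ V) :
    tableauOfFill (α ++ σ) (SCTChain.appendFill α σ U V) =
      stackTableau α (tableauOfFill α U) (tableauOfFill σ V) := by
  funext c
  have hle := hV.le_sum (c.1 - α.length, c.2)
  simp only [tableauOfFill, stackTableau, SCTChain.appendFill, List.sum_append]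
  split_ifs <;> omega

theorem isSCT_append_iff (hσ : ∀ τ, ¬GrowCover τ σ) :
    IsSCT (α ++ σ) T ↔ ∃ T₁ T₂, IsSCT α T₁ ∧ IsSCT σ T₂ ∧ T = stackTableau α T₁ T₂ := by
  constructor
  · rintro ⟨W, hW, rfl⟩
    obtain ⟨U, V, hU, hV, rfl⟩ := (SCTChain.append_iff hσ).1 hW
    exact ⟨_, _, ⟨U, hU, rfl⟩, ⟨V, hV, rfl⟩, tableauOfFill_appendFill hV⟩
  · rintro ⟨_, _, ⟨U, hU, rfl⟩, ⟨V, hV, rfl⟩, rfl⟩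
    exact ⟨_, hU.append hV, (tableauOfFill_appendFill hV).symm⟩

namespace IsSCT

theorem le_sum (h : IsSCT α T) (c : ℕ × ℕ) : T c ≤ α.sum := by
  obtain ⟨U, -, rfl⟩ := h
  dsimp only
  split_ifs <;> omega

theorem eq_zero_of_length_le (h : IsSCT α T) {c : ℕ × ℕ} (hc : α.length ≤ c.1) : T c = 0 := by
  obtain ⟨U, hU, rfl⟩ := h
  simp [hU.eq_zero_of_length_le hc]

theorem bottom_corner_eq_sum (h : IsSCT α T) (hα : α ≠ []) : T (α.length - 1, 0) = α.sum := by
  obtain ⟨U, hU, rfl⟩ := h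
  simp [hU.bottom_corner_eq_one hα]

theorem exists_eq_one (h : IsSCT α T) (hα : α ≠ []) : ∃ c, T c = 1 := by
  obtain ⟨U, hU, rfl⟩ := h
  obtain ⟨c, hc⟩ := hU.exists_eq_sum hα
  have hsum : α.sum ≠ 0 := fun h0 => by
    obtain ⟨x, hx⟩ := List.exists_mem_of_ne_nil α hα
    have := List.le_sum_of_mem hx
    have := hU.pos x hx
    omega
  exact ⟨c, by simp [hc, hsum]⟩

end IsSCT

theorem stackTableau_eq_iff_of_le (h₁ : IsSCT α T₁) {c : ℕ × ℕ} {v : ℕ} (hv : 0 < v)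
    (hvα : v ≤ α.sum) : stackTableau α T₁ T₂ c = v ↔ T₁ c = v := by
  unfold stackTableau
  split_ifs with hc h₂
  · rfl
  · simp [h₁.eq_zero_of_length_le (not_lt.mp hc), hv.ne]
  · simp only [h₁.eq_zero_of_length_le (not_lt.mp hc)]
    omega

theorem stackTableau_eq_iff_of_lt (h₁ : IsSCT α T₁) {c : ℕ × ℕ} {v : ℕ} (hv : α.sum < v) :
    stackTableau α T₁ T₂ c = v ↔ α.length ≤ c.1 ∧ T₂ (c.1 - α.length, c.2) = v - α.sum := by
  have := h₁.le_sum c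
  unfold stackTableau
  split_ifs <;> omega

theorem stackTableau_injective {T₁' T₂' : ℕ × ℕ → ℕ} (h₁ : IsSCT α T₁) (h₁' : IsSCT α T₁')
    (h : stackTableau α T₁ T₂ = stackTableau α T₁' T₂') : T₁ = T₁' ∧ T₂ = T₂' := by
  constructor
  · funext c
    by_cases hc : c.1 < α.length
    · simpa [stackTableau, hc] using congrFun h c
    · rw [h₁.eq_zero_of_length_le (not_lt.mp hc), h₁'.eq_zero_of_length_le (not_lt.mp hc)]
  · funext ⟨a, b⟩
    have := congrFun h (a + α.length, b)
    simp only [stackTableau, Nat.add_sub_cancel, show ¬a + α.length < α.length by omega,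
      if_false] at this
    split_ifs at this <;> omega

theorem desC_stackTableau (h₁ : IsSCT α T₁) (h₂ : IsSCT σ T₂) (hσ : σ ≠ []) :
    desC (stackTableau α T₁ T₂) =
      desC T₁ ∪ {s | 0 < s ∧ s = α.sum} ∪ (α.sum + ·) '' desC T₂ := by
  ext i
  simp only [desC, Set.mem_union, Set.mem_ofPred_eq, Set.mem_image]
  constructor
  · rintro ⟨hi, p, q, hp, hq, hpq⟩
    rcases lt_trichotomy i α.sum with hlt | rfl | hgt
    · exact .inl <| .inl ⟨hi, p, q, (stackTableau_eq_iff_of_le h₁ hi hlt.le).1 hp,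
        (stackTableau_eq_iff_of_le h₁ (by omega) hlt).1 hq, hpq⟩
    · exact .inl <| .inr ⟨hi, rfl⟩
    · obtain ⟨-, hp⟩ := (stackTableau_eq_iff_of_lt h₁ hgt).1 hp
      obtain ⟨-, hq⟩ := (stackTableau_eq_iff_of_lt h₁ (by omega)).1 hq
      refine .inr ⟨i - α.sum, ⟨by omega, (p.1 - α.length, p.2), (q.1 - α.length, q.2), hp,
        by rw [hq]; omega, hpq⟩, by omega⟩
  · rintro ((⟨hi, p, q, hp, hq, hpq⟩ | ⟨hi, rfl⟩) | ⟨j, ⟨hj, p, q, hp, hq, hpq⟩, rfl⟩)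
    · have hq' : i + 1 ≤ α.sum := hq ▸ h₁.le_sum q
      exact ⟨hi, p, q, (stackTableau_eq_iff_of_le h₁ hi (by omega)).2 hp,
        (stackTableau_eq_iff_of_le h₁ (by omega) hq').2 hq, hpq⟩
    · have hα : α ≠ [] := by rintro rfl; simp at hi
      obtain ⟨c, hc⟩ := h₂.exists_eq_one hσ
      refine ⟨hi, (α.length - 1, 0), (c.1 + α.length, c.2), ?_, ?_, Nat.zero_le _⟩
      · exact (stackTableau_eq_iff_of_le h₁ hi le_rfl).2 (h₁.bottom_corner_eq_sum hα)
      · exact (stackTableau_eq_iff_of_lt h₁ (by omega)).2 ⟨by simp, by simpa using hc⟩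
    · refine ⟨by omega, (p.1 + α.length, p.2), (q.1 + α.length, q.2), ?_, ?_, hpq⟩
      · exact (stackTableau_eq_iff_of_lt h₁ (by omega)).2 ⟨by simp, by simpa using hp⟩
      · exact (stackTableau_eq_iff_of_lt h₁ (by omega)).2 ⟨by simp, by simp only [add_tsub_cancel_right, hq]; omega⟩

end

noncomputable def appendEquiv (α : List ℕ) {σ : List ℕ} (hσ : ∀ τ, ¬GrowCover τ σ) :
    {T // IsSCT α T} × {T // IsSCT σ T} ≃ {T // IsSCT (α ++ σ) T} :=
  Equiv.ofBijective
    (fun p => ⟨stackTableau α p.1 p.2, (isSCT_append_iff hσ).2 ⟨_, _, p.1.2, p.2.2, rfl⟩⟩)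
    ⟨fun p q h => by
      obtain ⟨h₁, h₂⟩ := stackTableau_injective p.1.2 q.1.2 (congrArg Subtype.val h)
      exact Prod.ext (Subtype.ext h₁) (Subtype.ext h₂),
    fun T => by
      obtain ⟨T₁, T₂, h₁, h₂, hT⟩ := (isSCT_append_iff hσ).1 T.2
      exact ⟨(⟨T₁, h₁⟩, ⟨T₂, h₂⟩), Subtype.ext hT.symm⟩⟩

theorem exists_equiv_append_of_isSCT_iff {σ : List ℕ} {T₀ : ℕ × ℕ → ℕ}
    (hσ : ∀ τ, ¬GrowCover τ σ) (hσ₀ : σ ≠ []) (hT₀ : ∀ T, IsSCT σ T ↔ T = T₀) (α : List ℕ) :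
    ∃ e : {T // IsSCT α T} ≃ {T // IsSCT (α ++ σ) T}, ∀ T,
      desC (e T).1 = desC T.1 ∪ {s | 0 < s ∧ s = α.sum} ∪ (α.sum + ·) '' desC T₀ := by
  let : Unique {T // IsSCT σ T} :=
    ⟨⟨⟨T₀, (hT₀ _).2 rfl⟩⟩, fun T => Subtype.ext ((hT₀ _).1 T.2)⟩
  exact ⟨(Equiv.prodUnique _ _).symm.trans (appendEquiv α hσ),
    fun T => desC_stackTableau T.2 ((hT₀ _).2 rfl) hσ₀⟩

theorem isSCT_one_iff (T : ℕ × ℕ → ℕ) :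
    IsSCT [1] T ↔ T = fun c => if c = (0, 0) then 1 else 0 := by
  have key : tableauOfFill [1] (SCTChain.prependFill [] fun _ => 0) =
      fun c => if c = (0, 0) then 1 else 0 := by
    funext c
    simp only [tableauOfFill, SCTChain.prependFill]
    split_ifs <;> simp_all
  constructor
  · rintro ⟨U, hU, rfl⟩
    rw [hU.eq_of_one]
    exact key
  · rintro rfl
    exact ⟨_, SCTChain.nil.prepend, key.symm⟩

theorem isSCT_one_two_iff (T : ℕ × ℕ → ℕ) :
    IsSCT [1, 2] T ↔
      T = fun c => if c = (0, 0) then 1 else if c = (1, 1) then 2 else if c = (1, 0) then 3 else 0 := by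
  have key : tableauOfFill [1, 2]
      (SCTChain.prependFill [2] (SCTChain.growFill [1] (SCTChain.prependFill [] fun _ => 0) 0)) =
      fun c => if c = (0, 0) then 1 else if c = (1, 1) then 2 else if c = (1, 0) then 3 else 0 := by
    funext ⟨a, b⟩
    simp only [tableauOfFill, SCTChain.prependFill, SCTChain.growFill]
    split_ifs <;> simp_all <;> omega
  constructor
  · rintro ⟨U, hU, rfl⟩
    rw [hU.eq_of_one_two]
    exact key
  · rintro rfl
    exact ⟨_, (SCTChain.nil.prepend.grow 0 (by simp) (by simp)).prepend, key.symm⟩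

theorem desC_one : desC (fun c : ℕ × ℕ => if c = (0, 0) then 1 else 0) = ∅ := by
  refine Set.eq_empty_of_forall_notMem fun i ⟨hi, p, q, _, hq, _⟩ => ?_
  dsimp only at hq
  split_ifs at hq
  omega

theorem desC_one_two :
    desC (fun c : ℕ × ℕ =>
      if c = (0, 0) then 1 else if c = (1, 1) then 2 else if c = (1, 0) then 3 else 0) = {1} := by
  ext i
  simp only [desC, Set.mem_ofPred_eq, Set.mem_singleton_iff]
  constructor
  · rintro ⟨hi, ⟨a, b⟩, ⟨c, d⟩, hp, hq, hpq⟩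
    simp only [Prod.mk.injEq] at hp hq hpq
    split_ifs at hp hq <;> omega
  · rintro rfl
    exact ⟨one_pos, (0, 0), (1, 1), by simp, by simp, zero_le_one⟩

theorem sct_append_one_and_one_two_bijections_general (α : List ℕ) :
    (∃ e : {T // IsSCT α T} ≃ {T // IsSCT (α ++ [1]) T},
      ∀ T, desC (e T).1 = desC T.1 ∪ {s | 0 < s ∧ s = α.sum}) ∧
    (∃ e : {T // IsSCT α T} ≃ {T // IsSCT (α ++ [1, 2]) T},
      ∀ T, desC (e T).1 = desC T.1 ∪
        {s | 0 < s ∧ (s = α.sum ∨ s = α.sum + 1)}) := by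
  obtain ⟨e₁, he₁⟩ := exists_equiv_append_of_isSCT_iff not_growCover_one
    (List.cons_ne_nil _ _) isSCT_one_iff α
  obtain ⟨e₂, he₂⟩ := exists_equiv_append_of_isSCT_iff not_growCover_one_two
    (List.cons_ne_nil _ _) isSCT_one_two_iff α
  refine ⟨⟨e₁, fun T => ?_⟩, ⟨e₂, fun T => ?_⟩⟩
  · rw [he₁, desC_one, Set.image_empty, Set.union_empty]
  · rw [he₂, desC_one_two, Set.image_singleton, Set.union_assoc]
    congr 1
    ext s
    simp only [Set.mem_union, Set.mem_ofPred_eq, Set.mem_singleton_iff]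
    omega

/-- There are descent-set-compatible bijections between the standard
composition tableaux of shape `α` and those of shapes `α·(1)` and `α·(1,2)`:
an SCT of shape `α` with descent composition `β` corresponds to an SCT of
shape `α·(1)` (resp. `α·(1,2)`) with descent composition `β·(1)` (resp.
`β·(1,2)`), i.e. with descent set enlarged by `{|α|}` (resp.
`{|α|, |α|+1}`).  In particular `d_{(α·(1))(β·(1))} = d_{αβ}` and
`d_{(α·(1,2))(β·(1,2))} = d_{αβ}` for all `β`, and these account for all
SCTx of shapes `α·(1)` and `α·(1,2)`. -/
theorem sct_append_one_and_one_two_bijections (α : List ℕ)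
    (hpos : ∀ x ∈ α, 0 < x) :
    (∃ e : {T // IsSCT α T} ≃ {T // IsSCT (α ++ [1]) T},
      ∀ T, desC (e T).1 = desC T.1 ∪ {s | 0 < s ∧ s = α.sum}) ∧
    (∃ e : {T // IsSCT α T} ≃ {T // IsSCT (α ++ [1, 2]) T},
      ∀ T, desC (e T).1 = desC T.1 ∪
        {s | 0 < s ∧ (s = α.sum ∨ s = α.sum + 1)}) :=
  sct_append_one_and_one_two_bijections_general α
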